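/- arXiv:1205.1147 — 6 statements merged into one kernel-verified Lean document; each statement's English description precedes it below -/
import Mathlib

section
/- Let m be a squarefree integer, m ≡ 2 or 3 (mod 4), and let ξ = (a + b√m)/c with a, b, c ∈ ℤ, c ≥ 2, gcd(a,b,c) = 1. If m < 0 and c² > −4m/3, then there exist γ, δ ∈ ℤ[√m] with 0 < |N(ξγ − δ)| < 1, where N is the field norm of ℚ(√m). -/
/-!
Since `gcd(a, b, c) = 1`, Bézout gives `γ = t + s√m` with `a s + b t ≡ 1 (mod c)`, so the
`√m`-coordinate of `ξγ` is `1/c` modulo `ℤ`. Choosing `δ` to cancel the integer part of that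
coordinate and to round the rational coordinate of `ξγ` leaves `ξγ - δ = x + √m / c` with
`|x| ≤ 1/2`, whose norm `x² - m/c²` is positive as `m < 0` and below `1/4 + 3/4` by the bound on `c`.
-/

lemma Int.exists_mul_add_mul_eq_one_add_mul {a b c : ℤ} (h : Int.gcd (Int.gcd a b) c = 1) :
    ∃ s t z : ℤ, a * s + b * t = 1 + c * z := by
  obtain ⟨u, v, huv⟩ := Int.isCoprime_iff_gcd_eq_one.mpr h
  refine ⟨a.gcdA b * u, a.gcdB b * u, -v, ?_⟩
  rw [Int.gcd_eq_gcd_ab a b] at huv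
  linarith

section NormForm

variable {m x y : ℚ}

lemma sq_sub_mul_sq_pos (hm : m < 0) (hy : y ≠ 0) : 0 < x ^ 2 - m * y ^ 2 := by
  nlinarith [sq_nonneg x, pow_pos (abs_pos.mpr hy) 2, sq_abs y]

lemma sq_sub_mul_sq_lt_one (hx : |x| ≤ 1 / 2) (hy : -m * y ^ 2 < 3 / 4) :
    x ^ 2 - m * y ^ 2 < 1 := by
  nlinarith [abs_nonneg x, sq_abs x]

end NormForm

lemma neg_mul_one_div_sq_lt_three_fourths {m c : ℚ} (hc : c ≠ 0) (h : c ^ 2 > -4 * m / 3) :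
    -m * (1 / c) ^ 2 < 3 / 4 := by
  rw [div_pow, one_pow, mul_one_div, div_lt_iff₀ (by positivity)]
  linarith

/-- `ξ = (a + b√m)/c`, `γ = γ₁ + γ₂√m`, `δ = δ₁ + δ₂√m`, and `ξγ - δ` is written in the
coordinates `u + v√m` of its norm `u² - m v²`. -/
theorem dh_neg_case_general (m : ℤ)
    (hmneg : m < 0) (a b c : ℤ)
    (hgcd : Int.gcd (Int.gcd a b) c = 1)
    (hbound : ((c : ℚ)) ^ 2 > -4 * (m : ℚ) / 3) :
    ∃ γ₁ γ₂ δ₁ δ₂ : ℤ,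
      0 < |((a * γ₁ + m * b * γ₂ : ℤ) / (c : ℚ) - (δ₁ : ℚ)) ^ 2
            - (m : ℚ) * ((a * γ₂ + b * γ₁ : ℤ) / (c : ℚ) - (δ₂ : ℚ)) ^ 2| ∧
      |((a * γ₁ + m * b * γ₂ : ℤ) / (c : ℚ) - (δ₁ : ℚ)) ^ 2
            - (m : ℚ) * ((a * γ₂ + b * γ₁ : ℤ) / (c : ℚ) - (δ₂ : ℚ)) ^ 2| < 1 := by
  have hmq : (m : ℚ) < 0 := by exact_mod_cast hmneg
  have hc : (c : ℚ) ≠ 0 := by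
    rintro hc
    rw [hc] at hbound
    linarith
  obtain ⟨s, t, z, hstz⟩ := Int.exists_mul_add_mul_eq_one_add_mul hgcd
  set q : ℚ := ((a * t + m * b * s : ℤ) : ℚ) / c
  refine ⟨t, s, round q, z, ?_⟩
  have hirr : ((a * s + b * t : ℤ) : ℚ) / c - z = 1 / c := by
    rw [hstz]
    push_cast
    field_simp
    ring
  have hpos := sq_sub_mul_sq_pos (x := q - round q) hmq (one_div_ne_zero hc)
  rw [hirr, abs_of_pos hpos]
  exact ⟨hpos, sq_sub_mul_sq_lt_one (abs_sub_round q)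
    (neg_mul_one_div_sq_lt_three_fourths hc hbound)⟩

/-- Elements of ℚ(√m) are represented by rational coordinates (u, v) ↦ u + v√m,
with norm u² − m v².  ξ = (a + b√m)/c, γ = γ₁ + γ₂√m, δ = δ₁ + δ₂√m ∈ ℤ[√m]. -/
theorem dh_neg_case (m : ℤ) (hm : Squarefree m) (hm23 : m % 4 = 2 ∨ m % 4 = 3)
    (hmneg : m < 0) (a b c : ℤ) (hc : 2 ≤ c)
    (hgcd : Int.gcd (Int.gcd a b) c = 1)
    (hbound : ((c : ℚ)) ^ 2 > -4 * (m : ℚ) / 3) :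
    ∃ γ₁ γ₂ δ₁ δ₂ : ℤ,
      0 < |((a * γ₁ + m * b * γ₂ : ℤ) / (c : ℚ) - (δ₁ : ℚ)) ^ 2
            - (m : ℚ) * ((a * γ₂ + b * γ₁ : ℤ) / (c : ℚ) - (δ₂ : ℚ)) ^ 2| ∧
      |((a * γ₁ + m * b * γ₂ : ℤ) / (c : ℚ) - (δ₁ : ℚ)) ^ 2
            - (m : ℚ) * ((a * γ₂ + b * γ₁ : ℤ) / (c : ℚ) - (δ₂ : ℚ)) ^ 2| < 1 :=
  dh_neg_case_general m hmneg a b c hgcd hbound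
end

section
/- Let m be a squarefree integer with m ≡ 2 or 3 (mod 4), m > 0, and let ξ = (a + b√m)/c with a, b, c ∈ ℤ, c ≥ 2, gcd(a,b,c) = 1. If c² > 4m/5, then there exist γ, δ ∈ ℤ[√m] with 0 < |N(ξγ − δ)| < 1. -/
/-!
Since gcd(a, b, c) = 1 one can pick γ = γ₁ + γ₂√m ∈ ℤ[√m] with aγ₂ + bγ₁ ≡ 1 (mod c); subtracting
a suitable δ₂√m then makes the √m-coordinate of ξγ − δ equal to 1/c, so that
N(ξγ − δ) = (t − δ₁)² − m/c² for some rational t. As m/c² < 5/4, an integer δ₁ can be chosen with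
(t − δ₁)² ∈ [0, 1/4] (if m/c² < 1) or (t − δ₁)² ∈ [1/4, 1] (if m/c² ≥ 1), which puts the norm in
(−1, 1); it is nonzero because m/c² is not the square of a rational.
-/

theorem Int.not_isSquare_of_squarefree {m : ℤ} (hm : Squarefree m) (hm₁ : 1 < m) :
    ¬IsSquare m := by
  rintro ⟨r, rfl⟩
  rcases Int.isUnit_iff.mp (hm r dvd_rfl) with rfl | rfl <;> norm_num at hm₁

theorem Int.not_isSquare_cast_div_sq_of_squarefree {m : ℤ} (hm : Squarefree m) (hm₁ : 1 < m)
    {c : ℚ} (hc : c ≠ 0) : ¬IsSquare ((m : ℚ) / c ^ 2) := by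
  intro hsq
  have hm_sq : IsSquare (m : ℚ) := by
    simpa [div_mul_cancel₀, hc] using hsq.mul (IsSquare.sq c)
  exact Int.not_isSquare_of_squarefree hm hm₁ (Rat.isSquare_intCast_iff.mp hm_sq)

section Rounding

variable {K : Type*} [Field K] [LinearOrder K] [IsStrictOrderedRing K] [FloorRing K]

theorem sq_sub_round_le (t : K) : (t - round t) ^ 2 ≤ 1 / 4 := by
  have h := abs_sub_round t
  nlinarith [abs_nonneg (t - round t), sq_abs (t - round t)]

theorem exists_int_sq_sub_mem_Icc (t : K) : ∃ d : ℤ, (t - d) ^ 2 ∈ Set.Icc (1 / 4) 1 := by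
  obtain ⟨h₁, h₂⟩ := abs_le.mp (abs_sub_round t)
  rcases le_or_gt 0 (t - round t) with h | h
  · refine ⟨round t + 1, ?_, ?_⟩ <;> push_cast <;> nlinarith
  · refine ⟨round t - 1, ?_, ?_⟩ <;> push_cast <;> nlinarith

theorem exists_int_abs_sq_sub_lt_one {M : K} (hM₀ : 0 < M) (hM : M < 5 / 4) (t : K) :
    ∃ d : ℤ, |(t - d) ^ 2 - M| < 1 := by
  rcases lt_or_ge M 1 with hM₁ | hM₁
  · have h₁ := sq_sub_round_le t
    have h₀ := sq_nonneg (t - round t)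
    exact ⟨round t, abs_lt.mpr ⟨by linarith, by linarith⟩⟩
  · obtain ⟨d, hd₁, hd₂⟩ := exists_int_sq_sub_mem_Icc t
    exact ⟨d, abs_lt.mpr ⟨by linarith, by linarith⟩⟩

end Rounding

theorem Int.exists_mul_add_mul_add_mul_eq_one {a b c : ℤ} (h : Int.gcd (Int.gcd a b) c = 1) :
    ∃ x y z : ℤ, a * x + b * y + c * z = 1 := by
  obtain ⟨p, q, hpq⟩ := Int.isCoprime_iff_gcd_eq_one.mpr h
  refine ⟨p * Int.gcdA a b, p * Int.gcdB a b, q, ?_⟩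
  rw [← hpq, Int.gcd_eq_gcd_ab]
  ring

/-- Elements of ℚ(√m) are represented by rational coordinates (u, v) ↦ u + v√m,
with norm u² − m v².  ξ = (a + b√m)/c, γ = γ₁ + γ₂√m, δ = δ₁ + δ₂√m ∈ ℤ[√m]. -/
theorem dh_pos_case (m : ℤ) (hm : Squarefree m) (hm23 : m % 4 = 2 ∨ m % 4 = 3)
    (hmpos : 0 < m) (a b c : ℤ) (hc : 2 ≤ c)
    (hgcd : Int.gcd (Int.gcd a b) c = 1)
    (hbound : ((c : ℚ)) ^ 2 > 4 * (m : ℚ) / 5) :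
    ∃ γ₁ γ₂ δ₁ δ₂ : ℤ,
      0 < |((a * γ₁ + m * b * γ₂ : ℤ) / (c : ℚ) - (δ₁ : ℚ)) ^ 2
            - (m : ℚ) * ((a * γ₂ + b * γ₁ : ℤ) / (c : ℚ) - (δ₂ : ℚ)) ^ 2| ∧
      |((a * γ₁ + m * b * γ₂ : ℤ) / (c : ℚ) - (δ₁ : ℚ)) ^ 2
            - (m : ℚ) * ((a * γ₂ + b * γ₁ : ℤ) / (c : ℚ) - (δ₂ : ℚ)) ^ 2| < 1 := by
  obtain ⟨x, y, z, hxyz⟩ := Int.exists_mul_add_mul_add_mul_eq_one hgcd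
  have hc₀ : (0 : ℚ) < c := by exact_mod_cast (by omega : (0 : ℤ) < c)
  have hM₀ : 0 < (m : ℚ) / c ^ 2 := by positivity
  have hM : (m : ℚ) / c ^ 2 < 5 / 4 := by
    rw [div_lt_iff₀ (by positivity)]
    linarith
  have hM_nonsq := Int.not_isSquare_cast_div_sq_of_squarefree hm (by omega) hc₀.ne'
  set t : ℚ := ((a * y + m * b * x : ℤ) : ℚ) / c
  obtain ⟨d, hd⟩ := exists_int_abs_sq_sub_lt_one hM₀ hM t
  have hnorm : (t - d) ^ 2 - m * (((a * x + b * y : ℤ) : ℚ) / c - ((-z : ℤ) : ℚ)) ^ 2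
      = (t - d) ^ 2 - m / c ^ 2 := by
    have hxyzQ : ((a * x + b * y : ℤ) : ℚ) = 1 - c * z := by
      rw [eq_sub_of_add_eq hxyz]; push_cast; ring
    rw [hxyzQ, Int.cast_neg]
    field_simp
    ring
  refine ⟨y, x, d, -z, ?_, ?_⟩ <;> rw [hnorm]
  · exact abs_pos.mpr (sub_ne_zero.mpr fun h => hM_nonsq (h ▸ IsSquare.sq _))
  · exact hd
end

section
/- Let m ≡ 5 (mod 8) be squarefree, let D be the ring of integers ℤ[(1+√m)/2] of ℚ(√m), and let ξ = (a + b√m)/4 with a ≡ b ≡ 1 (mod 4). Then there exist γ, δ ∈ D with |N(ξγ − δ)| = 1/4; in particular 0 < |N(ξγ − δ)| < 1. -/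
/-- D = ℤ[(1+√m)/2]: elements (g₁ + g₂√m)/2 with g₁ ≡ g₂ (mod 2).
ξ = (a + b√m)/4; then ξγ − δ has coordinates
((a*g₁ + m*b*g₂)/8 − d₁/2, (a*g₂ + b*g₁)/8 − d₂/2) and norm u² − m v². -/
theorem dh_quarter_case (m : ℤ) (hm : Squarefree m) (hm5 : m % 8 = 5)
    (a b : ℤ) (ha : a % 4 = 1) (hb : b % 4 = 1) :
    ∃ g₁ g₂ d₁ d₂ : ℤ, g₁ % 2 = g₂ % 2 ∧ d₁ % 2 = d₂ % 2 ∧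
      |((a * g₁ + m * b * g₂ : ℤ) / (8 : ℚ) - (d₁ : ℚ) / 2) ^ 2
        - (m : ℚ) * ((a * g₂ + b * g₁ : ℤ) / (8 : ℚ) - (d₂ : ℚ) / 2) ^ 2| = 1 / 4 ∧
      0 < |((a * g₁ + m * b * g₂ : ℤ) / (8 : ℚ) - (d₁ : ℚ) / 2) ^ 2
        - (m : ℚ) * ((a * g₂ + b * g₁ : ℤ) / (8 : ℚ) - (d₂ : ℚ) / 2) ^ 2| ∧
      |((a * g₁ + m * b * g₂ : ℤ) / (8 : ℚ) - (d₁ : ℚ) / 2) ^ 2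
        - (m : ℚ) * ((a * g₂ + b * g₁ : ℤ) / (8 : ℚ) - (d₂ : ℚ) / 2) ^ 2| < 1 := by
  obtain ⟨α, hα⟩ : ∃ α, a = 4 * α + 1 := ⟨a / 4, by omega⟩
  obtain ⟨β, hβ⟩ : ∃ β, b = 4 * β + 1 := ⟨b / 4, by omega⟩
  obtain ⟨μ, hμ⟩ : ∃ μ, m = 8 * μ + 5 := ⟨m / 8, by omega⟩
  obtain ⟨k, hk⟩ : ∃ k : ℤ, k = 2*α^2 + α - 16*μ*β^2 - 8*μ*β - μ - 10*β^2 - 5*β - 1 := ⟨_, rfl⟩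
  refine ⟨a, -b, 2 * k, 0, by omega, ?_, ?_, ?_, ?_⟩
  · simpa using Int.mul_emod_right 2 k
  all_goals {
    have h1 : ((a * a + m * b * (-b) : ℤ) : ℚ) / 8 - ((2 * k : ℤ) : ℚ) / 2 = 1 / 2 := by
      subst hα hβ hμ; rw [hk]; push_cast; ring
    have h2 : ((a * (-b) + b * a : ℤ) : ℚ) / 8 - ((0 : ℤ) : ℚ) / 2 = 0 := by
      push_cast; ring
    rw [h1, h2]
    rw [show |(1/2:ℚ)^2 - (m:ℚ) * 0^2| = 1/4 by rw [abs_eq (by norm_num)]; norm_num]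
    try norm_num
  }
end

section
/- Let m be a squarefree integer, c ≥ 2 an integer, and a, b integers with gcd(a,b,c) = 1 and c ∤ (a² − m b²). Then there exist an integer q and an integer r with 0 < |r| ≤ c/2 such that, setting ξ = (a + b√m)/c, γ = a − b√m, δ = q, one has ξγ − δ = r/c, and hence 0 < |N(ξγ − δ)| < 1. -/
theorem Int.exists_eq_mul_add_of_not_dvd {n c : ℤ} (hc : 0 < c) (h : ¬ c ∣ n) :
    ∃ q r : ℤ, n = c * q + r ∧ r ≠ 0 ∧ 2 * |r| ≤ c := by
  lift c to ℕ using hc.le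
  have hc' : 0 < c := by exact_mod_cast hc
  refine ⟨n.bdiv c, n.bmod c, by linarith [n.bmod_add_bdiv c], ?_, ?_⟩
  · exact fun h0 => h (Int.dvd_iff_bmod_eq_zero.2 h0)
  · have hlow := Int.le_bmod (x := n) hc'
    have hhigh := Int.bmod_lt (x := n) hc'
    rcases abs_cases (n.bmod c) with ⟨habs, -⟩ | ⟨habs, -⟩ <;> omega

/-- For ξ = (a + b√m)/c and γ = a − b√m one has ξγ = (a² − m b²)/c, so with δ = q,
ξγ − δ = r/c, a rational of norm (r/c)². -/
theorem dh_nondvd_case_general (m : ℤ) (a b c : ℤ) (hc : 2 ≤ c)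
    (hndvd : ¬ c ∣ (a ^ 2 - m * b ^ 2)) :
    ∃ q r : ℤ, a ^ 2 - m * b ^ 2 = c * q + r ∧ 0 < |r| ∧ 2 * |r| ≤ c ∧
      ((a ^ 2 - m * b ^ 2 : ℤ) / (c : ℚ) - (q : ℚ)) = (r : ℚ) / c ∧
      0 < |((r : ℚ) / c) ^ 2| ∧ |((r : ℚ) / c) ^ 2| < 1 := by
  obtain ⟨q, r, hqr, hr, hrc⟩ := Int.exists_eq_mul_add_of_not_dvd (by omega) hndvd
  have hcQ : (0 : ℚ) < c := by exact_mod_cast (by omega : (0 : ℤ) < c)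
  have hxne : (r : ℚ) / c ≠ 0 := div_ne_zero (by exact_mod_cast hr) hcQ.ne'
  have hxlt : |(r : ℚ) / c| < 1 := by
    rw [abs_div, abs_of_pos hcQ, div_lt_one hcQ]
    exact_mod_cast (by omega : |r| < c)
  refine ⟨q, r, hqr, abs_pos.2 hr, hrc, ?_, by positivity, ?_⟩
  · rw [hqr]
    field_simp
    push_cast
    ring
  · rw [abs_pow]
    exact pow_lt_one₀ (abs_nonneg _) hxlt two_ne_zero

/-- With ξ = (a + b√m)/c, γ = a − b√m, δ = q, one has ξγ − δ = r/c, of norm (r/c)². -/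
theorem dh_nondvd_case (m : ℤ) (hm : Squarefree m) (a b c : ℤ) (hc : 2 ≤ c)
    (hgcd : Int.gcd (Int.gcd a b) c = 1)
    (hndvd : ¬ c ∣ (a ^ 2 - m * b ^ 2)) :
    ∃ q r : ℤ, a ^ 2 - m * b ^ 2 = c * q + r ∧ 0 < |r| ∧ 2 * |r| ≤ c ∧
      ((a ^ 2 - m * b ^ 2 : ℤ) / (c : ℚ) - (q : ℚ)) = (r : ℚ) / c ∧
      0 < |((r : ℚ) / c) ^ 2| ∧ |((r : ℚ) / c) ^ 2| < 1 :=
  dh_nondvd_case_general m a b c hc hndvd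
end

section
/- Let m be a squarefree positive integer, p an odd prime with p ∤ m, and suppose a, b, x, y are integers with p ∤ ab, a² ≡ m b² (mod p), and |x² − m y²| = 4p. Then there exist a choice of sign ε ∈ {±1} and an integer z with 2az ≡ x (mod p) and 2bz ≡ εy (mod p). -/
/-!
Reducing mod `p`, both `a / b` and `x / y` are square roots of `m`, so `b x ≡ ± a y`.
Then `z ≡ x / (2a)` satisfies `2 b z ≡ b x / a ≡ ± y`.
-/

theorem IsCoprime.exists_dvd_mul_sub {R : Type*} [CommRing R] {c p : R} (h : IsCoprime c p)
    (x : R) : ∃ z, p ∣ c * z - x := by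
  obtain ⟨u, v, huv⟩ := h
  exact ⟨u * x, ⟨-(v * x), by linear_combination x * huv⟩⟩

theorem Prime.dvd_sub_or_dvd_add_of_dvd_sq_sub_mul_sq {R : Type*} [CommRing R] {p m a b x y : R}
    (hp : Prime p) (hab : p ∣ a ^ 2 - m * b ^ 2) (hxy : p ∣ x ^ 2 - m * y ^ 2) :
    p ∣ b * x - a * y ∨ p ∣ b * x + a * y := by
  have h : (b * x - a * y) * (b * x + a * y) =
      b ^ 2 * (x ^ 2 - m * y ^ 2) - y ^ 2 * (a ^ 2 - m * b ^ 2) := by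
    ring
  exact hp.dvd_or_dvd (h ▸ dvd_sub (hxy.mul_left _) (hab.mul_left _))

theorem Prime.dvd_mul_sub_of_dvd_mul_sub {R : Type*} [CommRing R] {p a b w x y : R}
    (hp : Prime p) (ha : ¬ p ∣ a) (hw : p ∣ a * w - x) (hx : p ∣ b * x - a * y) :
    p ∣ b * w - y := by
  have h : a * (b * w - y) = b * (a * w - x) + (b * x - a * y) := by ring
  exact (hp.dvd_or_dvd (h ▸ dvd_add (hw.mul_left b) hx)).resolve_left ha

theorem exists_sign_and_z_general (m : ℤ)
    (p : ℕ) (hp : p.Prime) (hodd : Odd p)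
    (a b x y : ℤ) (hab : ¬ (p : ℤ) ∣ (a * b))
    (hcong : (p : ℤ) ∣ (a ^ 2 - m * b ^ 2))
    (hnorm : |x ^ 2 - m * y ^ 2| = 4 * p) :
    ∃ ε : ℤ, (ε = 1 ∨ ε = -1) ∧ ∃ z : ℤ,
      (p : ℤ) ∣ (2 * a * z - x) ∧ (p : ℤ) ∣ (2 * b * z - ε * y) := by
  have hpZ : Prime (p : ℤ) := Nat.prime_iff_prime_int.mp hp
  have ha : ¬ (p : ℤ) ∣ a := fun h => hab (h.mul_right b)
  have h2 : ¬ (p : ℤ) ∣ 2 := by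
    rw [show (2 : ℤ) = (2 : ℕ) by rfl, Int.natCast_dvd_natCast,
      Nat.prime_dvd_prime_iff_eq hp Nat.prime_two]
    rintro rfl
    exact absurd hodd (by decide)
  have h2a : ¬ (p : ℤ) ∣ 2 * a := fun h => (hpZ.dvd_or_dvd h).elim h2 ha
  obtain ⟨z, hz⟩ := ((hpZ.coprime_iff_not_dvd.mpr h2a).symm).exists_dvd_mul_sub x
  have hz' : (p : ℤ) ∣ a * (2 * z) - x := by rwa [mul_left_comm, ← mul_assoc]
  have hxy : (p : ℤ) ∣ x ^ 2 - m * y ^ 2 := (dvd_abs _ _).mp (hnorm ▸ dvd_mul_left _ _)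
  rcases hpZ.dvd_sub_or_dvd_add_of_dvd_sq_sub_mul_sq hcong hxy with h | h
  · refine ⟨1, Or.inl rfl, z, hz, ?_⟩
    simpa [mul_assoc, mul_left_comm] using hpZ.dvd_mul_sub_of_dvd_mul_sub ha hz' h
  · refine ⟨-1, Or.inr rfl, z, hz, ?_⟩
    simpa [mul_assoc, mul_left_comm] using
      hpZ.dvd_mul_sub_of_dvd_mul_sub (y := -y) ha hz' (by rwa [mul_neg, sub_neg_eq_add])

theorem exists_sign_and_z (m : ℤ) (hm : Squarefree m) (hmpos : 0 < m)
    (p : ℕ) (hp : p.Prime) (hodd : Odd p) (hpm : ¬ (p : ℤ) ∣ m)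
    (a b x y : ℤ) (hab : ¬ (p : ℤ) ∣ (a * b))
    (hcong : (p : ℤ) ∣ (a ^ 2 - m * b ^ 2))
    (hnorm : |x ^ 2 - m * y ^ 2| = 4 * p) :
    ∃ ε : ℤ, (ε = 1 ∨ ε = -1) ∧ ∃ z : ℤ,
      (p : ℤ) ∣ (2 * a * z - x) ∧ (p : ℤ) ∣ (2 * b * z - ε * y) :=
  exists_sign_and_z_general m p hp hodd a b x y hab hcong hnorm
end

section
/- Let m < 0 be squarefree and D the ring of integers of ℚ(√m). If p is a rational prime with p < √(−Δ/3) where Δ is the discriminant of ℚ(√m), then there is no element π ∈ D with |N(π)| = p. -/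
/-!
Write `π = x + y√m` with `x, y ∈ ℚ`, so that `Tr π = 2x` and `N π = x² - m y²`. Both are
integers, and `m (2y)² = (Tr π)² - 4 N π` with `m` squarefree forces `2y ∈ ℤ`; hence
`4 N π = a² - m b²` with `a, b ∈ ℤ`. If `N π = p`, then `b ≠ 0` since `p` is not a square, and
then `4p ≥ -m` when `m ≡ 1 mod 4`, while otherwise `a, b` are even and `p ≥ -m`. In both cases
`4p ≥ -Δ > 3p²`, which is impossible for `p ≥ 2`.
-/

open NumberField

section QuadraticExtension

variable {F K : Type*} [Field F] [Field K] [Algebra F K] {m : F} {d : K}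

theorem linearIndependent_one_of_sq_eq (hd : d ^ 2 = algebraMap F K m) (hm : ¬IsSquare m) :
    LinearIndependent F ![1, d] := by
  rw [linearIndependent_fin2]
  refine ⟨fun hd0 => hm ⟨0, ?_⟩, fun a ha => hm ⟨a⁻¹, ?_⟩⟩
  · simp only [Matrix.cons_val_one, Matrix.cons_val_zero] at hd0
    rw [hd0, zero_pow two_ne_zero, eq_comm, map_eq_zero] at hd
    rw [hd, mul_zero]
  · simp only [Matrix.cons_val_one, Matrix.cons_val_zero, Algebra.smul_def] at ha
    have h : a ^ 2 * m = 1 := FaithfulSMul.algebraMap_injective F K <| by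
      rw [map_mul, map_pow, ← hd, ← mul_pow, ha, map_one, one_pow]
    have ha0 : a ≠ 0 := by rintro rfl; simp at h
    field_simp
    linear_combination h

theorem exists_eq_algebraMap_add_algebraMap_mul (hd : d ^ 2 = algebraMap F K m)
    (hgen : Algebra.adjoin F {d} = ⊤) (w : K) :
    ∃ x y : F, w = algebraMap F K x + algebraMap F K y * d := by
  have hw : w ∈ Algebra.adjoin F {d} := hgen ▸ Algebra.mem_top
  induction hw using Algebra.adjoin_induction with
  | mem u hu => exact ⟨0, 1, by simp [Set.mem_singleton_iff.mp hu]⟩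
  | algebraMap r => exact ⟨r, 0, by simp⟩
  | add u v _ _ hu hv =>
    obtain ⟨x₁, y₁, rfl⟩ := hu
    obtain ⟨x₂, y₂, rfl⟩ := hv
    exact ⟨x₁ + x₂, y₁ + y₂, by simp only [map_add]; ring⟩
  | mul u v _ _ hu hv =>
    obtain ⟨x₁, y₁, rfl⟩ := hu
    obtain ⟨x₂, y₂, rfl⟩ := hv
    refine ⟨x₁ * x₂ + m * y₁ * y₂, x₁ * y₂ + y₁ * x₂, ?_⟩
    simp only [map_add, map_mul]
    linear_combination algebraMap F K y₁ * algebraMap F K y₂ * hd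

theorem span_one_sqrt_eq_top (hd : d ^ 2 = algebraMap F K m)
    (hgen : Algebra.adjoin F {d} = ⊤) : ⊤ ≤ Submodule.span F (Set.range ![1, d]) := by
  rintro w -
  obtain ⟨x, y, rfl⟩ := exists_eq_algebraMap_add_algebraMap_mul hd hgen w
  rw [← Algebra.smul_def, Algebra.algebraMap_eq_smul_one]
  exact Submodule.add_mem _ (Submodule.smul_mem _ _ (Submodule.subset_span ⟨0, rfl⟩))
    (Submodule.smul_mem _ _ (Submodule.subset_span ⟨1, rfl⟩))

noncomputable def sqrtBasis (hd : d ^ 2 = algebraMap F K m) (hm : ¬IsSquare m)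
    (hgen : Algebra.adjoin F {d} = ⊤) : Module.Basis (Fin 2) F K :=
  .mk (linearIndependent_one_of_sq_eq hd hm) (span_one_sqrt_eq_top hd hgen)

theorem sqrtBasis_repr (hd : d ^ 2 = algebraMap F K m) (hm : ¬IsSquare m)
    (hgen : Algebra.adjoin F {d} = ⊤) (x y : F) :
    ⇑((sqrtBasis hd hm hgen).repr (algebraMap F K x + algebraMap F K y * d)) = ![x, y] := by
  have h : algebraMap F K x + algebraMap F K y * d =
      x • sqrtBasis hd hm hgen 0 + y • sqrtBasis hd hm hgen 1 := by
    simp [sqrtBasis, Algebra.smul_def]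
  ext i
  fin_cases i <;> simp [h]

theorem leftMulMatrix_sqrtBasis (hd : d ^ 2 = algebraMap F K m) (hm : ¬IsSquare m)
    (hgen : Algebra.adjoin F {d} = ⊤) (x y : F) :
    Algebra.leftMulMatrix (sqrtBasis hd hm hgen) (algebraMap F K x + algebraMap F K y * d) =
      !![x, m * y; y, x] := by
  have h₀ : (algebraMap F K x + algebraMap F K y * d) * sqrtBasis hd hm hgen 0 =
      algebraMap F K x + algebraMap F K y * d := by
    simp [sqrtBasis]
  have h₁ : (algebraMap F K x + algebraMap F K y * d) * sqrtBasis hd hm hgen 1 =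
      algebraMap F K (m * y) + algebraMap F K x * d := by
    simp only [sqrtBasis, Module.Basis.mk_apply, Matrix.cons_val_one, Matrix.cons_val_zero, map_mul]
    linear_combination algebraMap F K y * hd
  ext i j
  rw [Algebra.leftMulMatrix_eq_repr_mul]
  fin_cases j
  · rw [Fin.zero_eta, h₀, sqrtBasis_repr]
    fin_cases i <;> rfl
  · rw [Fin.mk_one, h₁, sqrtBasis_repr]
    fin_cases i <;> rfl

theorem norm_algebraMap_add_algebraMap_mul (hd : d ^ 2 = algebraMap F K m) (hm : ¬IsSquare m)
    (hgen : Algebra.adjoin F {d} = ⊤) (x y : F) :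
    Algebra.norm F (algebraMap F K x + algebraMap F K y * d) = x ^ 2 - m * y ^ 2 := by
  rw [Algebra.norm_eq_matrix_det (sqrtBasis hd hm hgen), leftMulMatrix_sqrtBasis,
    Matrix.det_fin_two_of]
  ring

theorem trace_algebraMap_add_algebraMap_mul (hd : d ^ 2 = algebraMap F K m) (hm : ¬IsSquare m)
    (hgen : Algebra.adjoin F {d} = ⊤) (x y : F) :
    Algebra.trace F K (algebraMap F K x + algebraMap F K y * d) = 2 * x := by
  rw [Algebra.trace_eq_matrix_trace (sqrtBasis hd hm hgen), leftMulMatrix_sqrtBasis,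
    Matrix.trace_fin_two_of, two_mul]

end QuadraticExtension

theorem Rat.den_eq_one_of_squarefree_mul_sq {m n : ℤ} {q : ℚ} (hm : Squarefree m)
    (h : m * q ^ 2 = n) : q.den = 1 := by
  have hq : (q.num : ℚ) = q * q.den := (Rat.mul_den_eq_num q).symm
  have hZ : m * q.num ^ 2 = n * (q.den : ℤ) ^ 2 := by
    have : (m : ℚ) * q.num ^ 2 = n * (q.den : ℚ) ^ 2 := by
      rw [hq, ← h]; ring
    exact_mod_cast this
  have hcop : IsCoprime (q.den : ℤ) q.num := by
    rw [Int.isCoprime_iff_gcd_eq_one, Int.gcd_comm]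
    exact q.reduced
  have hdvd : (q.den : ℤ) * q.den ∣ m := by
    rw [← sq]
    exact hcop.pow.dvd_of_dvd_mul_right ⟨n, by rw [hZ, mul_comm]⟩
  exact Nat.isUnit_iff.mp (Int.ofNat_isUnit.mp (hm _ hdvd))

theorem exists_int_four_mul_norm_eq {K : Type*} [Field K] [NumberField K] {m : ℤ} {d : K}
    (hm : Squarefree m) (hm' : ¬IsSquare (m : ℚ)) (hd : d ^ 2 = m)
    (hgen : Algebra.adjoin ℚ {d} = ⊤) (π : 𝓞 K) :
    ∃ a b : ℤ, 4 * Algebra.norm ℚ (π : K) = a ^ 2 - m * b ^ 2 := by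
  have hd' : d ^ 2 = algebraMap ℚ K m := by rw [hd, map_intCast]
  obtain ⟨x, y, hxy⟩ := exists_eq_algebraMap_add_algebraMap_mul hd' hgen π
  have htrace : (Algebra.trace ℤ (𝓞 K) π : ℚ) = 2 * x := by
    rw [Algebra.coe_trace_int, hxy, trace_algebraMap_add_algebraMap_mul hd' hm' hgen]
  have hnorm : (Algebra.norm ℤ π : ℚ) = x ^ 2 - m * y ^ 2 := by
    rw [Algebra.coe_norm_int, hxy, norm_algebraMap_add_algebraMap_mul hd' hm' hgen]
  have hy : (m : ℚ) * (2 * y) ^ 2 =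
      (Algebra.trace ℤ (𝓞 K) π ^ 2 - 4 * Algebra.norm ℤ π : ℤ) := by
    push_cast
    rw [htrace, hnorm]
    ring
  refine ⟨Algebra.trace ℤ (𝓞 K) π, (2 * y).num, ?_⟩
  rw [Rat.coe_int_num_of_den_eq_one (Rat.den_eq_one_of_squarefree_mul_sq hm hy), htrace,
    ← Algebra.coe_norm_int, hnorm]
  ring

theorem Int.isSquare_of_four_mul_eq_sq {n a : ℤ} (h : 4 * n = a ^ 2) : IsSquare n := by
  obtain ⟨c, rfl⟩ : Even a := (Int.even_pow' two_ne_zero).mp ⟨2 * n, by rw [← h]; ring⟩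
  exact ⟨c, mul_left_cancel₀ four_ne_zero (by linear_combination h)⟩

theorem Int.emod_four_ne_zero_of_squarefree {m : ℤ} (hm : Squarefree m) : m % 4 ≠ 0 := by
  intro h
  have := Int.isUnit_iff.mp (hm 2 (Int.dvd_of_emod_eq_zero h))
  omega

theorem Int.even_and_even_of_four_dvd_sq_sub_mul_sq {m a b : ℤ} (hm₀ : m % 4 ≠ 0)
    (hm₁ : m % 4 ≠ 1) (h : 4 ∣ a ^ 2 - m * b ^ 2) : Even a ∧ Even b := by
  rcases Int.even_or_odd' a with ⟨s, rfl | rfl⟩ <;> rcases Int.even_or_odd' b with ⟨t, rfl | rfl⟩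
  · exact ⟨⟨s, two_mul s⟩, ⟨t, two_mul t⟩⟩
  all_goals ring_nf at h; omega

theorem Int.neg_le_sq_sub_mul_sq {m a b : ℤ} (hm : m ≤ 0) (hb : b ≠ 0) :
    -m ≤ a ^ 2 - m * b ^ 2 := by
  have : 1 ≤ b ^ 2 := (one_le_sq_iff_one_le_abs b).mpr (Int.one_le_abs hb)
  nlinarith [sq_nonneg a]

theorem neg_le_four_mul_of_eq_sq_sub_mul_sq {m n a b Δ : ℤ} (hm : Squarefree m) (hmneg : m < 0)
    (hΔ : Δ = if m % 4 = 1 then m else 4 * m) (h : 4 * n = a ^ 2 - m * b ^ 2) (hb : b ≠ 0) :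
    -Δ ≤ 4 * n := by
  split_ifs at hΔ with hm₁
  · rw [hΔ, h]
    exact Int.neg_le_sq_sub_mul_sq hmneg.le hb
  · obtain ⟨⟨s, rfl⟩, ⟨t, rfl⟩⟩ := Int.even_and_even_of_four_dvd_sq_sub_mul_sq
      (Int.emod_four_ne_zero_of_squarefree hm) hm₁ ⟨n, h.symm⟩
    have ht : t ≠ 0 := by rintro rfl; simp at hb
    have := Int.neg_le_sq_sub_mul_sq (a := s) hmneg.le ht
    rw [hΔ]
    linarith

/-- For an imaginary quadratic field, no prime below the Gauss bound √(−Δ/3)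
is the absolute value of the norm of an algebraic integer. -/
theorem no_small_norm (m : ℤ) (hm : Squarefree m) (hmneg : m < 0)
    (Δ : ℤ) (hΔ : Δ = if m % 4 = 1 then m else 4 * m)
    (K : Type*) [Field K] [NumberField K] (sqm : K) (hsq : sqm ^ 2 = (m : K))
    (hgen : Algebra.adjoin ℚ {sqm} = ⊤)
    (p : ℕ) (hp : p.Prime) (hsmall : (p : ℝ) < Real.sqrt (-(Δ : ℝ) / 3)) :
    ¬ ∃ π : NumberField.RingOfIntegers K, |Algebra.norm ℚ (π : K)| = (p : ℚ) := by
  rintro ⟨π, hπ⟩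
  have hm' : ¬IsSquare (m : ℚ) := fun h => (Int.cast_lt_zero.mpr hmneg).not_ge h.nonneg
  obtain ⟨a, b, hab⟩ := exists_int_four_mul_norm_eq hm hm' hsq hgen π
  have hnorm_nonneg : 0 ≤ Algebra.norm ℚ (π : K) := by
    have : (m : ℚ) < 0 := by exact_mod_cast hmneg
    nlinarith [sq_nonneg (a : ℚ), sq_nonneg (b : ℚ)]
  have h4p : 4 * (p : ℤ) = a ^ 2 - m * b ^ 2 := by
    rw [abs_of_nonneg hnorm_nonneg] at hπ
    rw [hπ] at hab
    exact_mod_cast hab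
  have hb : b ≠ 0 := by
    rintro rfl
    exact (Nat.prime_iff_prime_int.mp hp).not_isSquare
      (Int.isSquare_of_four_mul_eq_sq (by simpa using h4p))
  have hΔp := neg_le_four_mul_of_eq_sq_sub_mul_sq hm hmneg hΔ h4p hb
  have hpΔ : 3 * (p : ℤ) ^ 2 < -Δ := by
    have := (Real.lt_sqrt (Nat.cast_nonneg p)).mp hsmall
    have : (3 * p ^ 2 : ℝ) < -Δ := by linarith
    exact_mod_cast this
  nlinarith [hp.two_le]
end
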